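/- Let M_n > 0 and β_n > 0 vary with n, let the losses (L_n) be measurable, bounded below, lower semicontinuous and coercive with L_n → L pointwise, L lower semicontinuous, inf_Θ L ≥ limsup_n inf_Θ L_n > −∞, suppose 𝒬 allows for Dirac measures, and suppose D_n(Q,Π_n) ≤ M_n for all Q ∈ 𝒬 (the divergence and prior may also vary with n). Let Q_n minimise T_n(Q) = n·J_{L_n}(Q) + (1/β_n)·D_n(Q,Π_n) over 𝒬. (i) If M_n/(β_n·n) → 0, then Q_n(A) → 0 for every measurable A with inf_A L > inf_Θ L and liminf_n inf_A L_n > inf_Θ L. (ii) If (ε_n) is positive with ε_n → 0 and n·ε_n·β_n/M_n → ∞, and there exist k > 0 and N with inf_{N_{ε_n}^c} L_n − inf_Θ L_n ≥ k·ε_n for all n ≥ N, where N_{ε_n} := {θ : L(θ) ≤ inf_Θ L + ε_n}, then Q_n(N_{ε_n}) → 1. -/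

import Mathlib

open MeasureTheory Filter Topology
open scoped ENNReal NNReal

/-- The loss functional `J_f(ν) := ∫ f dν`, valued in the extended reals; for `f`
bounded below it takes values in `(-∞, ∞]`. -/
noncomputable def J {Θ : Type*} [MeasurableSpace Θ] (f : Θ → ℝ) (ν : Measure Θ) : EReal :=
  ((∫⁻ θ, ENNReal.ofReal (f θ) ∂ν : ℝ≥0∞) : EReal) -
    ((∫⁻ θ, ENNReal.ofReal (-f θ) ∂ν : ℝ≥0∞) : EReal)

/-- The GVI objective `T n β L D Π Q := n · J_L(Q) + (1/β) · D(Q, Π)`. -/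
noncomputable def T {Θ : Type*} [MeasurableSpace Θ] (n : ℕ) (β : ℝ) (L : Θ → ℝ)
    (D : ProbabilityMeasure Θ → ProbabilityMeasure Θ → ℝ)
    (prior Q : ProbabilityMeasure Θ) : EReal :=
  ((n : ℝ) : EReal) * J L (Q : Measure Θ) + ((1 / β * D Q prior : ℝ) : EReal)

/-- `f : Θ → ℝ` is coercive if for every `c` there is a compact set outside of which `f > c`. -/
def Coercive {Θ : Type*} [TopologicalSpace Θ] (f : Θ → ℝ) : Prop :=
  ∀ c : ℝ, ∃ K : Set Θ, IsCompact K ∧ ∀ θ ∉ K, c < f θ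

/-- The mixture `a·μ + (1−a)·ν` of two probability measures. -/
noncomputable def mix {Θ : Type*} [MeasurableSpace Θ] (μ ν : ProbabilityMeasure Θ) (a : ℝ)
    (ha0 : 0 ≤ a) (ha1 : a ≤ 1) : ProbabilityMeasure Θ :=
  ⟨ENNReal.ofReal a • (μ : Measure Θ) + ENNReal.ofReal (1 - a) • (ν : Measure Θ), by
    constructor
    simp only [Measure.coe_add, Pi.add_apply, Measure.smul_apply, smul_eq_mul, measure_univ,
      mul_one]
    rw [← ENNReal.ofReal_add ha0 (by linarith)]
    norm_num⟩

/-- The Dirac probability measure at `θ`. -/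
noncomputable def diracProb {Θ : Type*} [MeasurableSpace Θ] (θ : Θ) : ProbabilityMeasure Θ :=
  ⟨Measure.dirac θ, inferInstance⟩

/-- `𝒬` allows for Dirac measures: it is weak*-closed and the infimum of `J_f` over `𝒬`
equals the infimum of `f` over `Θ`, for every bounded below, lsc, coercive `f`. -/
def AllowsDiracs {Θ : Type*} [MeasurableSpace Θ] [TopologicalSpace Θ] [OpensMeasurableSpace Θ]
    (𝒬 : Set (ProbabilityMeasure Θ)) : Prop :=
  IsClosed 𝒬 ∧ ∀ f : Θ → ℝ, (∃ b, ∀ θ, b ≤ f θ) → LowerSemicontinuous f → Coercive f →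
    (⨅ ν : 𝒬, J f (ν.1 : Measure Θ)) = ((⨅ θ, f θ : ℝ) : EReal)

/-!
Comparing the minimiser `Q_n` of `T_n` with an almost optimal `Q ∈ 𝒬`, which exists because `𝒬`
allows for Dirac measures, and using `0 ≤ D_n ≤ M_n` gives
`J_{L_n}(Q_n) ≤ inf L_n + M_n / (β_n n)`. Markov's inequality turns this into
`d · Q_n(A) ≤ M_n / (β_n n)` whenever `L_n ≥ inf L_n + d` on `A`. For (i) the gap `d` is uniform
in `n`, since `limsup inf L_n ≤ inf L < liminf inf_A L_n`; for (ii) take `A = N_{ε_n}ᶜ` and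
`d = k ε_n`.
-/

section LossFunctional

variable {Θ : Type*} [MeasurableSpace Θ]

theorem J_eq_integral {ν : Measure Θ} {f : Θ → ℝ} (hf : Integrable f ν) :
    J f ν = ((∫ θ, f θ ∂ν : ℝ) : EReal) := by
  have hneg : ∫⁻ θ, ENNReal.ofReal (-f θ) ∂ν ≠ ⊤ := hf.neg.lintegral_lt_top.ne
  rw [J, integral_eq_lintegral_pos_part_sub_lintegral_neg_part hf, EReal.coe_sub,
    EReal.coe_ennreal_toReal hf.lintegral_lt_top.ne, EReal.coe_ennreal_toReal hneg]

theorem J_mono {ν : Measure Θ} {f g : Θ → ℝ} (h : ∀ θ, g θ ≤ f θ) : J g ν ≤ J f ν :=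
  EReal.sub_le_sub
    (EReal.coe_ennreal_le_coe_ennreal_iff.2
      (lintegral_mono fun θ => ENNReal.ofReal_le_ofReal (h θ)))
    (EReal.coe_ennreal_le_coe_ennreal_iff.2
      (lintegral_mono fun θ => ENNReal.ofReal_le_ofReal (neg_le_neg (h θ))))

theorem add_mul_measureReal_le_J {ν : Measure Θ} [IsProbabilityMeasure ν] {f : Θ → ℝ}
    {A : Set Θ} (hA : MeasurableSet A) {c d : ℝ} (hc : ∀ θ, c ≤ f θ)
    (hcd : ∀ θ ∈ A, c + d ≤ f θ) :
    ((c + d * ν.real A : ℝ) : EReal) ≤ J f ν := by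
  have hle : ∀ θ, c + A.indicator (fun _ => d) θ ≤ f θ := by
    intro θ
    by_cases hθ : θ ∈ A
    · simpa [hθ] using hcd θ hθ
    · simpa [hθ] using hc θ
  have hind : Integrable (A.indicator fun _ => d) ν := (integrable_const d).indicator hA
  calc ((c + d * ν.real A : ℝ) : EReal)
      = J (fun θ => c + A.indicator (fun _ => d) θ) ν := by
        rw [J_eq_integral (f := fun θ => c + A.indicator (fun _ => d) θ)
            ((integrable_const c).add hind), integral_add (integrable_const c) hind,
          integral_const, integral_indicator_const d hA]
        simp [mul_comm]
    _ ≤ J f ν := J_mono hle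

end LossFunctional

theorem EReal.le_add_div_of_mul_le_mul_add {x y : EReal} {n e : ℝ} (hn : 0 < n)
    (h : (n : EReal) * x ≤ n * y + e) : x ≤ y + ((e / n : ℝ) : EReal) := by
  induction x using EReal.rec with
  | bot => exact bot_le
  | top =>
    induction y using EReal.rec with
    | bot => simp [EReal.coe_mul_top_of_pos hn, EReal.coe_mul_bot_of_pos hn] at h
    | top => simp
    | coe y => simp [EReal.coe_mul_top_of_pos hn, ← EReal.coe_mul, ← EReal.coe_add] at h
  | coe x =>
    induction y using EReal.rec with
    | bot => simp [EReal.coe_mul_bot_of_pos hn, ← EReal.coe_mul] at h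
    | top => simp
    | coe y =>
      norm_cast at h ⊢
      have : x - y ≤ e / n := by rw [le_div_iff₀ hn]; linarith
      linarith

theorem exists_pos_eventually_add_le_of_limsup_lt_liminf {ι : Type*} {l : Filter ι}
    {a b : ι → ℝ} (h : limsup (fun i => (a i : EReal)) l < liminf (fun i => (b i : EReal)) l) :
    ∃ d > 0, ∀ᶠ i in l, a i + d ≤ b i := by
  obtain ⟨s, hs, hst⟩ := EReal.exists_between_coe_real h
  obtain ⟨t, hst, ht⟩ := EReal.exists_between_coe_real hst
  refine ⟨t - s, sub_pos.2 (EReal.coe_lt_coe_iff.1 hst), ?_⟩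
  filter_upwards [eventually_lt_of_limsup_lt hs, eventually_lt_of_lt_liminf ht] with i ha hb
  norm_cast at ha hb
  linarith

section Minimizer

variable {Θ : Type*} [MeasurableSpace Θ] {𝒬 : Set (ProbabilityMeasure Θ)} {L : Θ → ℝ}
  {n : ℕ} {β M : ℝ} {D : ProbabilityMeasure Θ → ProbabilityMeasure Θ → ℝ}
  {Pr Q₀ : ProbabilityMeasure Θ}

theorem J_le_J_add_of_isMinOn_T (hn : 0 < n) (hβ : 0 < β) (hD₀ : 0 ≤ D Q₀ Pr)
    (hD : ∀ Q ∈ 𝒬, D Q Pr ≤ M) (hmin : IsMinOn (T n β L D Pr) 𝒬 Q₀) {Q : ProbabilityMeasure Θ}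
    (hQ : Q ∈ 𝒬) : J L Q₀ ≤ J L Q + ((M / (β * n) : ℝ) : EReal) := by
  rw [← div_div]
  refine EReal.le_add_div_of_mul_le_mul_add (Nat.cast_pos.2 hn) ?_
  calc ((n : ℝ) : EReal) * J L Q₀
      ≤ T n β L D Pr Q₀ := le_add_of_nonneg_right (mod_cast by positivity)
    _ ≤ T n β L D Pr Q := isMinOn_iff.1 hmin Q hQ
    _ ≤ ((n : ℝ) : EReal) * J L Q + ((M / β : ℝ) : EReal) := by
      refine add_le_add le_rfl (EReal.coe_le_coe_iff.2 ?_)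
      rw [one_div_mul_eq_div]
      exact div_le_div_of_nonneg_right (hD Q hQ) hβ.le

variable [TopologicalSpace Θ] [OpensMeasurableSpace Θ]

theorem J_le_iInf_add_of_isMinOn_T (h𝒬 : AllowsDiracs 𝒬) (hbdd : ∃ b, ∀ θ, b ≤ L θ)
    (hlsc : LowerSemicontinuous L) (hcoer : Coercive L) (hn : 0 < n) (hβ : 0 < β)
    (hD₀ : 0 ≤ D Q₀ Pr) (hD : ∀ Q ∈ 𝒬, D Q Pr ≤ M) (hmin : IsMinOn (T n β L D Pr) 𝒬 Q₀) :
    J L Q₀ ≤ ((⨅ θ, L θ : ℝ) : EReal) + ((M / (β * n) : ℝ) : EReal) := by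
  rw [← h𝒬.2 L hbdd hlsc hcoer, ← EReal.sub_le_iff_le_add (by simp) (by simp)]
  exact le_iInf fun Q => EReal.sub_le_of_le_add (J_le_J_add_of_isMinOn_T hn hβ hD₀ hD hmin Q.2)

theorem mul_apply_le_of_isMinOn_T (h𝒬 : AllowsDiracs 𝒬) (hbdd : ∃ b, ∀ θ, b ≤ L θ)
    (hlsc : LowerSemicontinuous L) (hcoer : Coercive L) (hn : 0 < n) (hβ : 0 < β)
    (hD₀ : 0 ≤ D Q₀ Pr) (hD : ∀ Q ∈ 𝒬, D Q Pr ≤ M) (hmin : IsMinOn (T n β L D Pr) 𝒬 Q₀)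
    {A : Set Θ} (hA : MeasurableSet A) {d : ℝ} (hgap : ∀ θ ∈ A, (⨅ θ, L θ) + d ≤ L θ) :
    d * (Q₀ A : ℝ) ≤ M / (β * n) := by
  obtain ⟨b, hb⟩ := hbdd
  have hinf : ∀ θ, (⨅ θ, L θ) ≤ L θ := ciInf_le ⟨b, Set.forall_mem_range.2 hb⟩
  have h := (add_mul_measureReal_le_J (ν := (Q₀ : Measure Θ)) hA hinf hgap).trans
    (J_le_iInf_add_of_isMinOn_T h𝒬 ⟨b, hb⟩ hlsc hcoer hn hβ hD₀ hD hmin)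
  rw [← EReal.coe_add, EReal.coe_le_coe_iff,
    ProbabilityMeasure.measureReal_eq_coe_coeFn] at h
  linarith

end Minimizer

section Sequence

variable {Θ : Type*} [MeasurableSpace Θ] [TopologicalSpace Θ] [OpensMeasurableSpace Θ]
  {𝒬 : Set (ProbabilityMeasure Θ)} {L : ℕ → Θ → ℝ} {β M : ℕ → ℝ}
  {D : ℕ → ProbabilityMeasure Θ → ProbabilityMeasure Θ → ℝ} {Pr Qn : ℕ → ProbabilityMeasure Θ}

theorem tendsto_apply_zero_of_isMinOn_T (h𝒬 : AllowsDiracs 𝒬)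
    (hbdd : ∀ n, ∃ b, ∀ θ, b ≤ L n θ) (hlsc : ∀ n, LowerSemicontinuous (L n))
    (hcoer : ∀ n, Coercive (L n)) (hβ : ∀ n, 0 < β n) (hD₀ : ∀ n, 0 ≤ D n (Qn n) (Pr n))
    (hD : ∀ n, ∀ Q ∈ 𝒬, D n Q (Pr n) ≤ M n)
    (hmin : ∀ n, IsMinOn (T n (β n) (L n) (D n) (Pr n)) 𝒬 (Qn n))
    {A : ℕ → Set Θ} (hA : ∀ n, MeasurableSet (A n)) {d : ℕ → ℝ} (hd : ∀ n, 0 < d n)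
    (hgap : ∀ᶠ n in atTop, (⨅ θ, L n θ) + d n ≤ ⨅ θ : A n, L n θ)
    (hrate : Tendsto (fun n => M n / (β n * n) / d n) atTop (𝓝 0)) :
    Tendsto (fun n => (Qn n (A n) : ℝ)) atTop (𝓝 0) := by
  refine squeeze_zero' (Eventually.of_forall fun n => NNReal.coe_nonneg _) ?_ hrate
  filter_upwards [hgap, eventually_gt_atTop 0] with n hgap hn
  obtain ⟨b, hb⟩ := hbdd n
  have hgap' : ∀ θ ∈ A n, (⨅ θ, L n θ) + d n ≤ L n θ := fun θ hθ =>
    hgap.trans <| ciInf_le (f := fun θ : A n => L n θ)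
      ⟨b, Set.forall_mem_range.2 fun θ => hb θ⟩ ⟨θ, hθ⟩
  rw [le_div_iff₀ (hd n), mul_comm]
  exact mul_apply_le_of_isMinOn_T h𝒬 ⟨b, hb⟩ (hlsc n) (hcoer n) hn (hβ n) (hD₀ n) (hD n)
    (hmin n) (hA n) hgap'

end Sequence

theorem gvi_varying_parameters_general {Θ : Type*} [TopologicalSpace Θ]
    [MeasurableSpace Θ] [BorelSpace Θ]
    (𝒬 : Set (ProbabilityMeasure Θ)) (h𝒬 : AllowsDiracs 𝒬)
    (L : ℕ → Θ → ℝ) (Llim : Θ → ℝ)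
    (hbdd : ∀ n, ∃ b : ℝ, ∀ θ, b ≤ L n θ)
    (hlsc : ∀ n, LowerSemicontinuous (L n)) (hcoer : ∀ n, Coercive (L n))
    (hLlimlsc : LowerSemicontinuous Llim)
    (hinf1 : Filter.limsup (fun n => ((⨅ θ : Θ, L n θ : ℝ) : EReal)) atTop ≤
      ((⨅ θ : Θ, Llim θ : ℝ) : EReal))
    (M β : ℕ → ℝ) (hβ : ∀ n, 0 < β n)
    (D : ℕ → ProbabilityMeasure Θ → ProbabilityMeasure Θ → ℝ)
    (hDnn : ∀ n, ∀ P Q : ProbabilityMeasure Θ, 0 ≤ D n P Q)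
    (Pr : ℕ → ProbabilityMeasure Θ)
    (hDbdd : ∀ n, ∀ Q ∈ 𝒬, D n Q (Pr n) ≤ M n)
    (Qn : ℕ → ProbabilityMeasure Θ)
    (hQn : ∀ n, Qn n ∈ 𝒬 ∧
      ∀ Q ∈ 𝒬, T n (β n) (L n) (D n) (Pr n) (Qn n) ≤ T n (β n) (L n) (D n) (Pr n) Q) :
    ((Tendsto (fun n : ℕ => M n / (β n * n)) atTop (nhds 0)) →
      ∀ A : Set Θ, MeasurableSet A → (⨅ θ : Θ, Llim θ) < ⨅ θ : A, Llim (θ : Θ) →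
        ((⨅ θ : Θ, Llim θ : ℝ) : EReal) <
          Filter.liminf (fun n => ((⨅ θ : A, L n (θ : Θ) : ℝ) : EReal)) atTop →
        Tendsto (fun n => ((Qn n) A : ℝ)) atTop (nhds 0)) ∧
    (∀ ε : ℕ → ℝ, (∀ n, 0 < ε n) → Tendsto ε atTop (nhds 0) →
      Tendsto (fun n : ℕ => (n : ℝ) * ε n * β n / M n) atTop atTop →
      (∃ k : ℝ, 0 < k ∧ ∃ N : ℕ, ∀ n ≥ N,
        k * ε n ≤ (⨅ θ : ({θ : Θ | Llim θ ≤ (⨅ θ' : Θ, Llim θ') + ε n}ᶜ : Set Θ), L n (θ : Θ)) -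
          ⨅ θ : Θ, L n θ) →
      Tendsto (fun n => ((Qn n) {θ : Θ | Llim θ ≤ (⨅ θ' : Θ, Llim θ') + ε n} : ℝ)) atTop
        (nhds 1)) := by
  have hmin n : IsMinOn (T n (β n) (L n) (D n) (Pr n)) 𝒬 (Qn n) := isMinOn_iff.2 (hQn n).2
  have hD₀ n : 0 ≤ D n (Qn n) (Pr n) := hDnn n _ _
  refine ⟨fun hrate A hA _ hgap => ?_, fun ε hε _ hrate ⟨k, hk, N, hgap⟩ => ?_⟩
  · obtain ⟨d, hd, hgapA⟩ :=
      exists_pos_eventually_add_le_of_limsup_lt_liminf (hinf1.trans_lt hgap)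
    exact tendsto_apply_zero_of_isMinOn_T h𝒬 hbdd hlsc hcoer hβ hD₀ hDbdd hmin (fun _ => hA)
      (fun _ => hd) hgapA (by simpa using hrate.div_const d)
  · set S := fun n => {θ : Θ | Llim θ ≤ (⨅ θ' : Θ, Llim θ') + ε n}
    have hS : ∀ n, MeasurableSet (S n) := fun n =>
      (hLlimlsc.isClosed_preimage _).measurableSet
    have hrate' : Tendsto (fun n => M n / (β n * n) / (k * ε n)) atTop (𝓝 0) := by
      have h : (fun n : ℕ => M n / (β n * n) / (k * ε n)) =
          fun n : ℕ => k⁻¹ * ((n : ℝ) * ε n * β n / M n)⁻¹ := by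
        funext n
        simp only [div_eq_mul_inv, mul_inv, inv_inv]
        ring
      rw [h]
      simpa using hrate.inv_tendsto_atTop.const_mul k⁻¹
    have hcompl := tendsto_apply_zero_of_isMinOn_T h𝒬 hbdd hlsc hcoer hβ hD₀ hDbdd hmin
      (fun n => (hS n).compl) (fun n => mul_pos hk (hε n))
      (eventually_atTop.2 ⟨N, fun n hn => by linarith [hgap n hn]⟩) hrate'
    have hS_eq : ∀ n, (Qn n (S n) : ℝ) = 1 - Qn n (S n)ᶜ := fun n => by
      rw [← ProbabilityMeasure.measureReal_eq_coe_coeFn,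
        ← ProbabilityMeasure.measureReal_eq_coe_coeFn, probReal_compl_eq_one_sub (hS n),
        sub_sub_cancel]
    rw [tendsto_congr hS_eq]
    simpa using (tendsto_const_nhds (x := (1 : ℝ))).sub hcompl

/-- relaxation of `M` and `β`: with `M_n`, `β_n`, divergences `D_n` and priors
`Π_n` varying in `n`, (i) if `M_n/(β_n · n) → 0` then the GVI posteriors still concentrate,
and (ii) with rates `ε_n → 0` such that `n·ε_n·β_n/M_n → ∞`, under the eventual gap condition,
`Q_n(N_{ε_n}) → 1`. -/
theorem gvi_varying_parameters {Θ : Type*} [TopologicalSpace Θ] [PolishSpace Θ]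
    [MeasurableSpace Θ] [BorelSpace Θ] [Nonempty Θ]
    (𝒬 : Set (ProbabilityMeasure Θ)) (h𝒬 : AllowsDiracs 𝒬)
    (L : ℕ → Θ → ℝ) (Llim : Θ → ℝ)
    (hmeas : ∀ n, Measurable (L n)) (hbdd : ∀ n, ∃ b : ℝ, ∀ θ, b ≤ L n θ)
    (hlsc : ∀ n, LowerSemicontinuous (L n)) (hcoer : ∀ n, Coercive (L n))
    (hLlimlsc : LowerSemicontinuous Llim)
    (hconv : ∀ θ : Θ, Tendsto (fun n => L n θ) atTop (nhds (Llim θ)))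
    (hinf1 : Filter.limsup (fun n => ((⨅ θ : Θ, L n θ : ℝ) : EReal)) atTop ≤
      ((⨅ θ : Θ, Llim θ : ℝ) : EReal))
    (hinf2 : (⊥ : EReal) < Filter.limsup (fun n => ((⨅ θ : Θ, L n θ : ℝ) : EReal)) atTop)
    (M β : ℕ → ℝ) (hM : ∀ n, 0 < M n) (hβ : ∀ n, 0 < β n)
    (D : ℕ → ProbabilityMeasure Θ → ProbabilityMeasure Θ → ℝ)
    (hDnn : ∀ n, ∀ P Q : ProbabilityMeasure Θ, 0 ≤ D n P Q)
    (Pr : ℕ → ProbabilityMeasure Θ)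
    (hDbdd : ∀ n, ∀ Q ∈ 𝒬, D n Q (Pr n) ≤ M n)
    (Qn : ℕ → ProbabilityMeasure Θ)
    (hQn : ∀ n, Qn n ∈ 𝒬 ∧
      ∀ Q ∈ 𝒬, T n (β n) (L n) (D n) (Pr n) (Qn n) ≤ T n (β n) (L n) (D n) (Pr n) Q) :
    ((Tendsto (fun n : ℕ => M n / (β n * n)) atTop (nhds 0)) →
      ∀ A : Set Θ, MeasurableSet A → (⨅ θ : Θ, Llim θ) < ⨅ θ : A, Llim (θ : Θ) →
        ((⨅ θ : Θ, Llim θ : ℝ) : EReal) <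
          Filter.liminf (fun n => ((⨅ θ : A, L n (θ : Θ) : ℝ) : EReal)) atTop →
        Tendsto (fun n => ((Qn n) A : ℝ)) atTop (nhds 0)) ∧
    (∀ ε : ℕ → ℝ, (∀ n, 0 < ε n) → Tendsto ε atTop (nhds 0) →
      Tendsto (fun n : ℕ => (n : ℝ) * ε n * β n / M n) atTop atTop →
      (∃ k : ℝ, 0 < k ∧ ∃ N : ℕ, ∀ n ≥ N,
        k * ε n ≤ (⨅ θ : ({θ : Θ | Llim θ ≤ (⨅ θ' : Θ, Llim θ') + ε n}ᶜ : Set Θ), L n (θ : Θ)) -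
          ⨅ θ : Θ, L n θ) →
      Tendsto (fun n => ((Qn n) {θ : Θ | Llim θ ≤ (⨅ θ' : Θ, Llim θ') + ε n} : ℝ)) atTop
        (nhds 1)) :=
  gvi_varying_parameters_general 𝒬 h𝒬 L Llim hbdd hlsc hcoer hLlimlsc hinf1 M β hβ D hDnn Pr hDbdd
    Qn hQn
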